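/- Let H and H' be complex Hilbert spaces, let S be a densely defined closed linear operator from H to H' with Hilbert adjoint S†, and let A = S† ∘ S be the composition with domain {f ∈ dom(S) : Sf ∈ dom(S†)}. Suppose there is a constant C > 0 such that for every u ∈ dom(S) there exists f ∈ dom(S) orthogonal to ker(S) with Sf = Su and ‖f‖ ≤ C‖Sf‖. Then the range of A is a closed subspace of H, and for every φ in the range of A there exists a unique f ∈ dom(A) orthogonal to ker(S) with Af = φ; moreover this f satisfies ‖f‖ ≤ C²‖φ‖. -/

import Mathlib

/-!
The key identity is `⟪S† S f, f⟫ = ‖S f‖²`. The hypothesis forces the lower bound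
`‖f‖ ≤ C ‖S f‖` on `dom S ∩ (ker S)ᗮ`, since two elements of it with the same image under `S`
differ by an element of `ker S ∩ (ker S)ᗮ = 0`; combined with the identity it gives
`‖S f‖ ≤ C ‖S† S f‖` and `‖f‖ ≤ C² ‖S† S f‖` there. Hence if `S† S fₙ → φ` with `fₙ ⊥ ker S`,
both `fₙ` and `S fₙ` are Cauchy, and closedness of `S` and of `S†` shows that the limits
solve `S† S f = φ`.
-/

open Filter Topology
open scoped ComplexInnerProductSpace LinearPMap

theorem CauchySeq.of_dist_le_mul {α β : Type*} [PseudoMetricSpace α] [PseudoMetricSpace β]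
    {u : ℕ → α} {v : ℕ → β} {K : ℝ} (hv : CauchySeq v)
    (h : ∀ n m, dist (u n) (u m) ≤ K * dist (v n) (v m)) : CauchySeq u := by
  rw [cauchySeq_iff_tendsto_dist_atTop_0] at hv ⊢
  exact squeeze_zero (fun _ => dist_nonneg) (fun p => h p.1 p.2) (by simpa using hv.const_mul K)

namespace LinearPMap

open scoped InnerProductSpace

theorem IsClosed.exists_apply_eq_of_tendsto {R E F α : Type*} [CommRing R] [AddCommGroup E]
    [AddCommGroup F] [Module R E] [Module R F] [TopologicalSpace E] [TopologicalSpace F]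
    {T : E →ₗ.[R] F} (hT : T.IsClosed) {l : Filter α} [l.NeBot] {u : α → T.domain} {x : E}
    {y : F} (hx : Tendsto (fun n => (u n : E)) l (𝓝 x)) (hy : Tendsto (fun n => T (u n)) l (𝓝 y)) :
    ∃ hx : x ∈ T.domain, T ⟨x, hx⟩ = y := by
  obtain ⟨z, rfl, rfl⟩ := T.mem_graph_iff.1 <|
    hT.mem_of_tendsto (hx.prodMk_nhds hy) (Eventually.of_forall fun n => T.mem_graph (u n))
  exact ⟨z.2, rfl⟩

variable {𝕜 E F : Type*} [RCLike 𝕜] [NormedAddCommGroup E] [InnerProductSpace 𝕜 E]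
  [NormedAddCommGroup F] [InnerProductSpace 𝕜 F] (S : E →ₗ.[𝕜] F)

def ker : Submodule 𝕜 E :=
  (LinearMap.ker S.toFun).map S.domain.subtype

theorem mem_orthogonal_ker_iff {f : E} :
    f ∈ S.kerᗮ ↔ ∀ (g : E) (hg : g ∈ S.domain), S ⟨g, hg⟩ = 0 → ⟪f, g⟫_𝕜 = 0 := by
  simp [Submodule.mem_orthogonal', ker]

theorem norm_le_of_mem_orthogonal_ker {C : ℝ}
    (hsolve : ∀ u : S.domain, ∃ f : S.domain, (f : E) ∈ S.kerᗮ ∧ S f = S u ∧ ‖(f : E)‖ ≤ C * ‖S f‖)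
    (f : S.domain) (hf : (f : E) ∈ S.kerᗮ) : ‖(f : E)‖ ≤ C * ‖S f‖ := by
  obtain ⟨f', hf', hSf', hle⟩ := hsolve f
  have hker : ((f' - f : S.domain) : E) ∈ S.ker :=
    ⟨f' - f, show S (f' - f) = 0 by rw [S.map_sub, hSf', sub_self], rfl⟩
  have horth : ((f' - f : S.domain) : E) ∈ S.kerᗮ := by simpa using sub_mem hf' hf
  obtain rfl : f' = f := by
    simpa [sub_eq_zero] using Submodule.disjoint_def.1 S.ker.orthogonal_disjoint _ hker horth
  exact hle

variable [CompleteSpace E]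

/-- The domain `{f ∈ dom S | S f ∈ dom S†}` of `S† S`, as a subspace of `dom S`. -/
noncomputable def adjointCompSelfDomain : Submodule 𝕜 S.domain :=
  S†.domain.comap S.toFun

noncomputable def adjointCompSelf : S.adjointCompSelfDomain →ₗ[𝕜] E :=
  S†.toFun ∘ₗ S.toFun.restrict fun _ hx => hx

theorem range_adjointCompSelf : Set.range S.adjointCompSelf =
    {φ | ∃ (f : E) (hf : f ∈ S.domain) (hSf : S ⟨f, hf⟩ ∈ S†.domain), S† ⟨S ⟨f, hf⟩, hSf⟩ = φ} := by
  ext φ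
  constructor
  · rintro ⟨⟨⟨f, hf⟩, hSf⟩, rfl⟩
    exact ⟨f, hf, hSf, rfl⟩
  · rintro ⟨f, hf, hSf, rfl⟩
    exact ⟨⟨⟨f, hf⟩, hSf⟩, rfl⟩

variable {S} in
theorem exists_mem_orthogonal_ker_adjointCompSelf_eq
    (hattain : ∀ u : S.domain, ∃ f : S.domain, (f : E) ∈ S.kerᗮ ∧ S f = S u)
    (x : S.adjointCompSelfDomain) : ∃ y : S.adjointCompSelfDomain,
      ((y : S.domain) : E) ∈ S.kerᗮ ∧ S.adjointCompSelf y = S.adjointCompSelf x := by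
  obtain ⟨f, hf, hSf⟩ := hattain x
  have hfD : f ∈ S.adjointCompSelfDomain := show S f ∈ S†.domain from hSf ▸ x.2
  exact ⟨⟨f, hfD⟩, hf, congrArg S† (Subtype.ext hSf)⟩

variable {S} (hS : Dense (S.domain : Set E))
include hS

theorem inner_adjointCompSelf_apply_self (x : S.adjointCompSelfDomain) :
    ⟪S.adjointCompSelf x, ((x : S.domain) : E)⟫_𝕜 = (‖S x‖ ^ 2 : 𝕜) := by
  rw [← inner_self_eq_norm_sq_to_K]
  exact adjoint_isFormalAdjoint hS ⟨S x, x.2⟩ x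

theorem norm_apply_sq_le (x : S.adjointCompSelfDomain) :
    ‖S x‖ ^ 2 ≤ ‖S.adjointCompSelf x‖ * ‖((x : S.domain) : E)‖ := by
  calc ‖S x‖ ^ 2 = ‖⟪S.adjointCompSelf x, ((x : S.domain) : E)⟫_𝕜‖ := by
        rw [inner_adjointCompSelf_apply_self hS]; simp
    _ ≤ _ := norm_inner_le_norm _ _

variable {C : ℝ} (hC : 0 ≤ C)
  (hbound : ∀ f : S.domain, (f : E) ∈ S.kerᗮ → ‖(f : E)‖ ≤ C * ‖S f‖)
include hC hbound

theorem norm_apply_le_of_mem_orthogonal_ker {x : S.adjointCompSelfDomain}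
    (hx : ((x : S.domain) : E) ∈ S.kerᗮ) : ‖S x‖ ≤ C * ‖S.adjointCompSelf x‖ := by
  rcases (norm_nonneg (S x)).eq_or_lt with h0 | hpos
  · rw [← h0]
    positivity
  refine le_of_mul_le_mul_right ?_ hpos
  calc ‖S x‖ * ‖S x‖ = ‖S x‖ ^ 2 := (sq _).symm
    _ ≤ ‖S.adjointCompSelf x‖ * ‖((x : S.domain) : E)‖ := norm_apply_sq_le hS x
    _ ≤ ‖S.adjointCompSelf x‖ * (C * ‖S x‖) := by gcongr; exact hbound x hx
    _ = C * ‖S.adjointCompSelf x‖ * ‖S x‖ := by ring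

theorem norm_le_sq_mul_of_mem_orthogonal_ker {x : S.adjointCompSelfDomain}
    (hx : ((x : S.domain) : E) ∈ S.kerᗮ) :
    ‖((x : S.domain) : E)‖ ≤ C ^ 2 * ‖S.adjointCompSelf x‖ :=
  calc ‖((x : S.domain) : E)‖ ≤ C * ‖S x‖ := hbound x hx
    _ ≤ C * (C * ‖S.adjointCompSelf x‖) := by
        gcongr; exact norm_apply_le_of_mem_orthogonal_ker hS hC hbound hx
    _ = C ^ 2 * ‖S.adjointCompSelf x‖ := by ring

theorem eq_of_adjointCompSelf_eq {x y : S.adjointCompSelfDomain}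
    (hx : ((x : S.domain) : E) ∈ S.kerᗮ) (hy : ((y : S.domain) : E) ∈ S.kerᗮ)
    (hxy : S.adjointCompSelf x = S.adjointCompSelf y) :
    ((x : S.domain) : E) = ((y : S.domain) : E) := by
  have := norm_le_sq_mul_of_mem_orthogonal_ker hS hC hbound (x := x - y)
    (by simpa using sub_mem hx hy)
  rw [LinearMap.map_sub, hxy, sub_self, norm_zero, mul_zero] at this
  simpa [sub_eq_zero] using norm_le_zero_iff.1 this

theorem isClosed_range_adjointCompSelf [CompleteSpace F] (hclosed : S.IsClosed)
    (hattain : ∀ u : S.domain, ∃ f : S.domain, (f : E) ∈ S.kerᗮ ∧ S f = S u) :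
    _root_.IsClosed (Set.range S.adjointCompSelf) := by
  refine IsSeqClosed.isClosed fun ψ φ hψ hlim => ?_
  choose y hy using hψ
  choose x hx hAx using fun n => exists_mem_orthogonal_ker_adjointCompSelf_eq hattain (y n)
  have hsub : ∀ n m, (((x n - x m : S.adjointCompSelfDomain) : S.domain) : E) ∈ S.kerᗮ :=
    fun n m => by simpa using sub_mem (hx n) (hx m)
  have hxc : CauchySeq fun n => ((x n : S.domain) : E) :=
    hlim.cauchySeq.of_dist_le_mul fun n m => by
      simpa [dist_eq_norm, ← hAx, ← hy] using
        norm_le_sq_mul_of_mem_orthogonal_ker hS hC hbound (hsub n m)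
  have hSc : CauchySeq fun n => S (x n) :=
    hlim.cauchySeq.of_dist_le_mul fun n m => by
      simpa [dist_eq_norm, ← hAx, ← hy, S.map_sub] using
        norm_apply_le_of_mem_orthogonal_ker hS hC hbound (hsub n m)
  obtain ⟨f, hf⟩ := cauchySeq_tendsto_of_complete hxc
  obtain ⟨g, hg⟩ := cauchySeq_tendsto_of_complete hSc
  obtain ⟨hfS, rfl⟩ := hclosed.exists_apply_eq_of_tendsto hf hg
  obtain ⟨hgS, rfl⟩ := (adjoint_isClosed hS).exists_apply_eq_of_tendsto
    (u := fun n => ⟨S (x n), (x n).2⟩) hg (hlim.congr fun n => ((hAx n).trans (hy n)).symm)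
  exact ⟨⟨⟨f, hfS⟩, hgS⟩, rfl⟩

end LinearPMap

/-- **Closed range and unique solvability for `A = S† ∘ S`.**
Let `S` be a densely defined closed operator between complex Hilbert spaces and let
`A = S† ∘ S` with domain `{f ∈ dom S : S f ∈ dom S†}`.  If there is `C > 0` such that for
every `u ∈ dom S` there is `f ∈ dom S` orthogonal to `ker S` with `S f = S u` and
`‖f‖ ≤ C‖S f‖`, then the range of `A` is closed, and for every `φ` in the range of `A`
there is a unique `f ∈ dom A` orthogonal to `ker S` with `A f = φ`; moreover
`‖f‖ ≤ C²‖φ‖`. -/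
theorem stmt1 {H H' : Type*} [NormedAddCommGroup H] [InnerProductSpace ℂ H] [CompleteSpace H]
    [NormedAddCommGroup H'] [InnerProductSpace ℂ H'] [CompleteSpace H']
    (S : H →ₗ.[ℂ] H') (hdense : Dense (S.domain : Set H)) (hclosed : S.IsClosed)
    (C : ℝ) (hC : 0 < C)
    (hsolve : ∀ (u : H) (hu : u ∈ S.domain), ∃ (f : H) (hf : f ∈ S.domain),
      (∀ (g : H) (hg : g ∈ S.domain), S ⟨g, hg⟩ = 0 → ⟪f, g⟫ = 0) ∧
      S ⟨f, hf⟩ = S ⟨u, hu⟩ ∧ ‖f‖ ≤ C * ‖S ⟨f, hf⟩‖) :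
    IsClosed {φ : H | ∃ (f : H) (hf : f ∈ S.domain) (hSf : S ⟨f, hf⟩ ∈ S.adjoint.domain),
        S.adjoint ⟨S ⟨f, hf⟩, hSf⟩ = φ} ∧
    ∀ φ ∈ {φ : H | ∃ (f : H) (hf : f ∈ S.domain) (hSf : S ⟨f, hf⟩ ∈ S.adjoint.domain),
        S.adjoint ⟨S ⟨f, hf⟩, hSf⟩ = φ},
      (∃! f : H, ∃ (hf : f ∈ S.domain) (hSf : S ⟨f, hf⟩ ∈ S.adjoint.domain),
        (∀ (g : H) (hg : g ∈ S.domain), S ⟨g, hg⟩ = 0 → ⟪f, g⟫ = 0) ∧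
        S.adjoint ⟨S ⟨f, hf⟩, hSf⟩ = φ) ∧
      (∀ f : H, (∃ (hf : f ∈ S.domain) (hSf : S ⟨f, hf⟩ ∈ S.adjoint.domain),
        (∀ (g : H) (hg : g ∈ S.domain), S ⟨g, hg⟩ = 0 → ⟪f, g⟫ = 0) ∧
        S.adjoint ⟨S ⟨f, hf⟩, hSf⟩ = φ) → ‖f‖ ≤ C ^ 2 * ‖φ‖) := by
  have hsolve' : ∀ u : S.domain, ∃ f : S.domain,
      (f : H) ∈ S.kerᗮ ∧ S f = S u ∧ ‖(f : H)‖ ≤ C * ‖S f‖ := by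
    rintro ⟨u, hu⟩
    obtain ⟨f, hf, horth, h⟩ := hsolve u hu
    exact ⟨⟨f, hf⟩, S.mem_orthogonal_ker_iff.2 horth, h⟩
  have hbound := S.norm_le_of_mem_orthogonal_ker hsolve'
  have hattain : ∀ u : S.domain, ∃ f : S.domain, (f : H) ∈ S.kerᗮ ∧ S f = S u :=
    fun u => (hsolve' u).imp fun _ h => ⟨h.1, h.2.1⟩
  rw [← S.range_adjointCompSelf]
  refine ⟨LinearPMap.isClosed_range_adjointCompSelf hdense hC.le hbound hclosed hattain, ?_⟩
  rintro _ ⟨x, rfl⟩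
  obtain ⟨y, hy, hAy⟩ := LinearPMap.exists_mem_orthogonal_ker_adjointCompSelf_eq hattain x
  refine ⟨⟨((y : S.domain) : H), ⟨y.1.2, y.2, S.mem_orthogonal_ker_iff.1 hy, hAy⟩, ?_⟩, ?_⟩
  · rintro f ⟨hf, hSf, horth, hAf⟩
    exact LinearPMap.eq_of_adjointCompSelf_eq hdense hC.le hbound (x := ⟨⟨f, hf⟩, hSf⟩)
      (S.mem_orthogonal_ker_iff.2 horth) hy (hAf.trans hAy.symm)
  · rintro f ⟨hf, hSf, horth, hAf⟩
    rw [← hAf]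
    exact LinearPMap.norm_le_sq_mul_of_mem_orthogonal_ker hdense hC.le hbound
      (x := ⟨⟨f, hf⟩, hSf⟩) (S.mem_orthogonal_ker_iff.2 horth)
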